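/- arXiv:2110.04501 — 2 statements merged into one kernel-verified Lean document; each statement's English description precedes it below -/
import Mathlib

section
/- If s ∈ S^c and t ∈ S, then t⁻¹ s t ∈ S^c. -/
/-- An inverse semigroup with zero: a semigroup with zero together with an inverse
operation such that `s s⁻¹ s = s`, `s⁻¹ s s⁻¹ = s⁻¹`, and idempotents commute
(which makes inverses unique). -/
class InverseSemigroupWithZero (S : Type*) extends SemigroupWithZero S, Inv S where
  mul_inv_mul : ∀ s : S, s * s⁻¹ * s = s
  inv_mul_inv : ∀ s : S, s⁻¹ * s * s⁻¹ = s⁻¹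
  idem_comm : ∀ e f : S, e * e = e → f * f = f → e * f = f * e

/-- `S^c := {s ∈ S : for all idempotents e with 0 ≠ e ≤ s⁻¹s, e·(s e s⁻¹) ≠ 0}`,
where `e ≤ f` iff `e * f = e`. -/
def Sc (S : Type*) [InverseSemigroupWithZero S] : Set S :=
  {s | ∀ e : S, e * e = e → e ≠ 0 → e * (s⁻¹ * s) = e → e * (s * e * s⁻¹) ≠ 0}

namespace ISWZ

variable {S : Type*} [InverseSemigroupWithZero S]

lemma mis (s : S) : s * s⁻¹ * s = s := InverseSemigroupWithZero.mul_inv_mul s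
lemma imi (s : S) : s⁻¹ * s * s⁻¹ = s⁻¹ := InverseSemigroupWithZero.inv_mul_inv s
lemma comm {e f : S} (he : e * e = e) (hf : f * f = f) : e * f = f * e :=
  InverseSemigroupWithZero.idem_comm e f he hf

lemma idem_inv_mul (s : S) : (s⁻¹ * s) * (s⁻¹ * s) = s⁻¹ * s := by
  calc (s⁻¹ * s) * (s⁻¹ * s) = s⁻¹ * (s * s⁻¹ * s) := by simp only [mul_assoc]
    _ = s⁻¹ * s := by rw [mis]

lemma idem_mul_inv (s : S) : (s * s⁻¹) * (s * s⁻¹) = s * s⁻¹ := by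
  calc (s * s⁻¹) * (s * s⁻¹) = s * (s⁻¹ * s * s⁻¹) := by simp only [mul_assoc]
    _ = s * s⁻¹ := by rw [imi]

lemma inv_unique {x y : S} (h1 : x * y * x = x) (h2 : y * x * y = y) : y = x⁻¹ := by
  have hyx : (y * x) * (y * x) = y * x := by
    calc (y * x) * (y * x) = (y * x * y) * x := by simp only [mul_assoc]
      _ = y * x := by rw [h2]
  have hxy : (x * y) * (x * y) = x * y := by
    calc (x * y) * (x * y) = x * (y * x * y) := by simp only [mul_assoc]
      _ = x * y := by rw [h2]
  have hy : y = x⁻¹ * x * y := by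
    calc y = y * x * y := h2.symm
      _ = y * (x * x⁻¹ * x) * y := by rw [mis]
      _ = ((y * x) * (x⁻¹ * x)) * y := by simp only [mul_assoc]
      _ = ((x⁻¹ * x) * (y * x)) * y := by rw [comm hyx (idem_inv_mul x)]
      _ = x⁻¹ * (x * y * x) * y := by simp only [mul_assoc]
      _ = x⁻¹ * x * y := by rw [h1]
  have hz : x⁻¹ = x⁻¹ * x * y := by
    calc x⁻¹ = x⁻¹ * x * x⁻¹ := (imi x).symm
      _ = x⁻¹ * (x * y * x) * x⁻¹ := by rw [h1]
      _ = x⁻¹ * ((x * y) * (x * x⁻¹)) := by simp only [mul_assoc]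
      _ = x⁻¹ * ((x * x⁻¹) * (x * y)) := by rw [comm hxy (idem_mul_inv x)]
      _ = (x⁻¹ * x * x⁻¹) * (x * y) := by simp only [mul_assoc]
      _ = x⁻¹ * (x * y) := by rw [imi]
      _ = x⁻¹ * x * y := by simp only [mul_assoc]
  exact hy.trans hz.symm

lemma inv_invo (x : S) : (x⁻¹)⁻¹ = x :=
  (inv_unique (imi x) (mis x)).symm

lemma key (a b : S) : (a * b) * (b⁻¹ * a⁻¹) * (a * b) = a * b := by
  calc (a * b) * (b⁻¹ * a⁻¹) * (a * b)
      = a * ((b * b⁻¹) * (a⁻¹ * a)) * b := by simp only [mul_assoc]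
    _ = a * ((a⁻¹ * a) * (b * b⁻¹)) * b := by
        rw [comm (idem_mul_inv b) (idem_inv_mul a)]
    _ = (a * a⁻¹ * a) * (b * b⁻¹ * b) := by simp only [mul_assoc]
    _ = a * b := by rw [mis, mis]

lemma inv_rev (a b : S) : (a * b)⁻¹ = b⁻¹ * a⁻¹ := by
  have h2 : (b⁻¹ * a⁻¹) * (a * b) * (b⁻¹ * a⁻¹) = b⁻¹ * a⁻¹ := by
    have h := key b⁻¹ a⁻¹
    rw [inv_invo, inv_invo] at h
    exact h
  exact (inv_unique (key a b) h2).symm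

lemma conj_idem {f : S} (s : S) (hf : f * f = f) (hfs : f * (s⁻¹ * s) = f) :
    (s * f * s⁻¹) * (s * f * s⁻¹) = s * f * s⁻¹ := by
  calc (s * f * s⁻¹) * (s * f * s⁻¹)
      = s * (f * (((s⁻¹ * s) * f) * s⁻¹)) := by simp only [mul_assoc]
    _ = s * (f * ((f * (s⁻¹ * s)) * s⁻¹)) := by rw [comm (idem_inv_mul s) hf]
    _ = s * (f * ((f * s⁻¹))) := by rw [hfs]
    _ = (s * (f * f)) * s⁻¹ := by simp only [mul_assoc]
    _ = s * f * s⁻¹ := by rw [hf]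

end ISWZ

open ISWZ in
/-- If `s ∈ S^c` and `t ∈ S`, then `t⁻¹ s t ∈ S^c`. -/
theorem Sc_conj_mem {S : Type*} [InverseSemigroupWithZero S] (s t : S)
    (hs : s ∈ Sc S) : t⁻¹ * s * t ∈ Sc S := by
  simp only [Sc, Set.mem_setOf_eq] at hs ⊢
  have hu : (t⁻¹ * s * t)⁻¹ = t⁻¹ * (s⁻¹ * t) := by
    rw [inv_rev, inv_rev, inv_invo]
  intro e he hene heu
  rw [hu] at heu ⊢
  simp only [mul_assoc] at heu
  -- heu : e * (t⁻¹ * (s⁻¹ * (t * (t⁻¹ * (s * t))))) = e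
  have hA : e * (t⁻¹ * t) = e := by
    calc e * (t⁻¹ * t)
        = (e * (t⁻¹ * (s⁻¹ * (t * (t⁻¹ * (s * t)))))) * (t⁻¹ * t) := by rw [heu]
      _ = e * (t⁻¹ * (s⁻¹ * (t * (t⁻¹ * (s * (t * t⁻¹ * t)))))) := by
          simp only [mul_assoc]
      _ = e * (t⁻¹ * (s⁻¹ * (t * (t⁻¹ * (s * t))))) := by rw [mis]
      _ = e := heu
  have hA2 : e * (t⁻¹ * (s⁻¹ * (s * t))) = e := by
    calc e * (t⁻¹ * (s⁻¹ * (s * t)))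
        = (e * (t⁻¹ * (s⁻¹ * (t * (t⁻¹ * (s * t)))))) * (t⁻¹ * (s⁻¹ * (s * t))) := by
          rw [heu]
      _ = e * (t⁻¹ * (s⁻¹ * (t * (t⁻¹ * (s * ((t * t⁻¹) * (s⁻¹ * s) * t)))))) := by
          simp only [mul_assoc]
      _ = e * (t⁻¹ * (s⁻¹ * (t * (t⁻¹ * (s * ((s⁻¹ * s) * (t * t⁻¹) * t)))))) := by
          rw [comm (idem_mul_inv t) (idem_inv_mul s)]
      _ = e * (t⁻¹ * (s⁻¹ * (t * (t⁻¹ * ((s * s⁻¹ * s) * (t * t⁻¹ * t)))))) := by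
          simp only [mul_assoc]
      _ = e * (t⁻¹ * (s⁻¹ * (t * (t⁻¹ * (s * t))))) := by rw [mis, mis]
      _ = e := heu
  have hfidem : (t * e * t⁻¹) * (t * e * t⁻¹) = t * e * t⁻¹ := by
    calc (t * e * t⁻¹) * (t * e * t⁻¹)
        = t * (e * (((t⁻¹ * t) * e) * t⁻¹)) := by simp only [mul_assoc]
      _ = t * (e * ((e * (t⁻¹ * t)) * t⁻¹)) := by rw [comm (idem_inv_mul t) he]
      _ = (t * (e * e)) * (t⁻¹ * t * t⁻¹) := by simp only [mul_assoc]
      _ = t * e * t⁻¹ := by rw [he, imi]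
  have hC : t⁻¹ * (t * e * t⁻¹) * t = e := by
    calc t⁻¹ * (t * e * t⁻¹) * t
        = ((t⁻¹ * t) * e) * (t⁻¹ * t) := by simp only [mul_assoc]
      _ = (e * (t⁻¹ * t)) * (t⁻¹ * t) := by rw [comm (idem_inv_mul t) he]
      _ = e * ((t⁻¹ * t) * (t⁻¹ * t)) := by simp only [mul_assoc]
      _ = e * (t⁻¹ * t) := by rw [idem_inv_mul]
      _ = e := hA
  have hfne : t * e * t⁻¹ ≠ 0 := by
    intro h
    exact hene (by rw [← hC, h, mul_zero, zero_mul])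
  have hD : (t * e * t⁻¹) * (s⁻¹ * s) = t * e * t⁻¹ := by
    calc (t * e * t⁻¹) * (s⁻¹ * s)
        = t * (e * (t⁻¹ * (s⁻¹ * s))) := by simp only [mul_assoc]
      _ = t * ((e * (t⁻¹ * (s⁻¹ * (s * t)))) * (t⁻¹ * (s⁻¹ * s))) := by rw [hA2]
      _ = t * (e * (t⁻¹ * ((s⁻¹ * s) * ((t * t⁻¹) * (s⁻¹ * s))))) := by
          simp only [mul_assoc]
      _ = t * (e * (t⁻¹ * ((s⁻¹ * s) * ((s⁻¹ * s) * (t * t⁻¹))))) := by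
          rw [comm (idem_mul_inv t) (idem_inv_mul s)]
      _ = t * (e * (t⁻¹ * (((s⁻¹ * s) * (s⁻¹ * s)) * (t * t⁻¹)))) := by
          simp only [mul_assoc]
      _ = t * (e * (t⁻¹ * ((s⁻¹ * s) * (t * t⁻¹)))) := by rw [idem_inv_mul]
      _ = (t * (e * (t⁻¹ * (s⁻¹ * (s * t))))) * t⁻¹ := by simp only [mul_assoc]
      _ = t * e * t⁻¹ := by rw [hA2]
  have hsfs := conj_idem s hfidem hD
  have hft : (t * e * t⁻¹) * (t * t⁻¹) = t * e * t⁻¹ := by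
    calc (t * e * t⁻¹) * (t * t⁻¹) = (t * e) * (t⁻¹ * t * t⁻¹) := by
          simp only [mul_assoc]
      _ = t * e * t⁻¹ := by rw [imi]
  have hxt : ((t * e * t⁻¹) * (s * (t * e * t⁻¹) * s⁻¹)) * (t * t⁻¹)
      = (t * e * t⁻¹) * (s * (t * e * t⁻¹) * s⁻¹) := by
    calc ((t * e * t⁻¹) * (s * (t * e * t⁻¹) * s⁻¹)) * (t * t⁻¹)
        = (t * e * t⁻¹) * ((s * (t * e * t⁻¹) * s⁻¹) * (t * t⁻¹)) := by
          simp only [mul_assoc]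
      _ = (t * e * t⁻¹) * ((t * t⁻¹) * (s * (t * e * t⁻¹) * s⁻¹)) := by
          rw [comm hsfs (idem_mul_inv t)]
      _ = ((t * e * t⁻¹) * (t * t⁻¹)) * (s * (t * e * t⁻¹) * s⁻¹) := by
          simp only [mul_assoc]
      _ = (t * e * t⁻¹) * (s * (t * e * t⁻¹) * s⁻¹) := by rw [hft]
  have hkey : (t * e * t⁻¹) * (s * (t * e * t⁻¹) * s⁻¹)
      = t * (e * ((t⁻¹ * s * t) * e * (t⁻¹ * (s⁻¹ * t)))) * t⁻¹ := by
    rw [← hxt]; simp only [mul_assoc]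
  intro h0
  exact hs (t * e * t⁻¹) hfidem hfne hD
    (hkey.trans (by rw [h0, mul_zero, zero_mul]))
end

section
/- Let 𝔠 be finitely aligned with Garside family 𝔖 (disjoint from 𝔠*, =*-transverse, locally bounded). Two normal infinite or finite words x = s₁s₂⋯ and y = t₁t₂⋯ satisfy χ_x = χ_y if and only if x = y (same length and sᵢ = tᵢ for all i). -/
open CategoryTheory

variable {C : Type*} [Category C]

/-- The set of morphisms of the small category `C`, with domain and codomain recorded:
an element `⟨a, b, f⟩` is a morphism `f` with `𝔡 = a` and `𝔱 = b`. -/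
abbrev Mor (C : Type*) [Category C] := Σ (a b : C), a ⟶ b

/-- The principal right ideal `x𝔠 = {xy : y ∈ 𝔡(x)𝔠}`. -/
def princ (x : Mor C) : Set (Mor C) :=
  {z | ∃ (c : C) (g : c ⟶ x.1), z = ⟨c, x.2.1, g ≫ x.2.2⟩}

/-- The right ideal `𝔳𝔠 = {x : 𝔱(x) = 𝔳}`. -/
def objIdeal (v : C) : Set (Mor C) := {z | z.2.1 = v}

/-- Image of a subset `e ⊆ 𝔠` under left multiplication by `c`. -/
def mulSet (c : Mor C) (e : Set (Mor C)) : Set (Mor C) :=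
  {z | ∃ (w : C) (g : w ⟶ c.1), (⟨w, c.1, g⟩ : Mor C) ∈ e ∧ z = ⟨w, c.2.1, g ≫ c.2.2⟩}

/-- Preimage of a subset `e ⊆ 𝔠` under left multiplication by `c`. -/
def divSet (c : Mor C) (e : Set (Mor C)) : Set (Mor C) :=
  {z | ∃ (w : C) (g : w ⟶ c.1), z = ⟨w, c.1, g⟩ ∧ (⟨w, c.2.1, g ≫ c.2.2⟩ : Mor C) ∈ e}

/-- The constructible right ideals of `𝔠`: the domains/images of elements of the left
inverse hull `I_l`, i.e. the smallest family of subsets containing all `𝔳𝔠` and closed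
under images and preimages of the left multiplication maps.  This family is the
semilattice `𝒥` of idempotents of `I_l` (product = intersection, order = inclusion). -/
inductive IsConstructible : Set (Mor C) → Prop
  | base (v : C) : IsConstructible (objIdeal v)
  | mul (c : Mor C) {e : Set (Mor C)} : IsConstructible e → IsConstructible (mulSet c e)
  | div (c : Mor C) {e : Set (Mor C)} : IsConstructible e → IsConstructible (divSet c e)

/-- A character on the semilattice `𝒥` of constructible right ideals: a nonzero
multiplicative `{0,1}`-valued map sending `∅ = 0` to `0`. -/
def IsCharacter (χ : Set (Mor C) → Prop) : Prop :=
  (∃ e : Set (Mor C), IsConstructible e ∧ χ e) ∧ ¬ χ (∅ : Set (Mor C)) ∧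
    ∀ e f : Set (Mor C), IsConstructible e → IsConstructible f →
      (χ (e ∩ f) ↔ χ e ∧ χ f)

/-- A maximal character: the filter `χ⁻¹(1)` is maximal among filters of characters. -/
def IsMaxCharacter (χ : Set (Mor C) → Prop) : Prop :=
  IsCharacter χ ∧ ∀ ψ : Set (Mor C) → Prop, IsCharacter ψ →
    (∀ e : Set (Mor C), IsConstructible e → χ e → ψ e) →
    ∀ e : Set (Mor C), IsConstructible e → ψ e → χ e

/-- `m` is an invertible element of `𝔠` (i.e. `m ∈ 𝔠*`). -/
def MInv (m : Mor C) : Prop := IsIso m.2.2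

/-- The product `g · f` (g after f), defined when `𝔱(f) = 𝔡(g)`. -/
def mcomp (g f : Mor C) (h : f.2.1 = g.1) : Mor C :=
  ⟨f.1, g.2.1, f.2.2 ≫ eqToHom h ≫ g.2.2⟩

/-- `ProdEq w m`: the finite word `w = s₁ s₂ ⋯` is a path (consecutive letters are
composable) and its product equals `m`.  The empty word has the identities as products. -/
inductive ProdEq : List (Mor C) → Mor C → Prop
  | nil (v : C) : ProdEq [] ⟨v, v, 𝟙 v⟩
  | single (s : Mor C) : ProdEq [s] s
  | cons (s : Mor C) {l : List (Mor C)} {b : Mor C} (h : ProdEq l b) (hc : b.2.1 = s.1) :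
      ProdEq (s :: l) (mcomp s b hc)

/-- `a ⪯ b`: `a` is a left divisor of `b`, i.e. `b ∈ a𝔠`. -/
def ldvd (a b : Mor C) : Prop := b ∈ princ a

/-- The pair `(a, b)` is `𝔖`-normal: for every `r ∈ 𝔖`, `r ⪯ ab` implies `r ⪯ a`. -/
def NormalPair (S : Set (Mor C)) (a b : Mor C) : Prop :=
  ∀ m : Mor C, ProdEq [a, b] m → ∀ r ∈ S, ldvd r m → ldvd r a

/-- A word is `𝔖`-normal: consecutive letters are composable and every consecutive
pair is `𝔖`-normal. -/
def IsNormalWord (S : Set (Mor C)) (w : List (Mor C)) : Prop :=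
  w.Chain' (fun a b => a.1 = b.2.1 ∧ NormalPair S a b)

/-- `𝔖♯ := 𝔖𝔠* ∪ 𝔠*`. -/
def SSharp (S : Set (Mor C)) : Set (Mor C) :=
  {m | MInv m ∨ ∃ s ∈ S, ∃ u : Mor C, MInv u ∧ ∃ h : u.2.1 = s.1, m = mcomp s u h}

/-- `𝔖` is closed under right comultiples. -/
def ClosedRightComult (S : Set (Mor C)) : Prop :=
  ∀ r ∈ S, ∀ s ∈ S, ∀ a : Mor C, ldvd r a → ldvd s a →
    ∃ t ∈ S, ldvd r t ∧ ldvd s t ∧ ldvd t a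

/-- `𝔖 ∪ 𝔠*` generates `𝔠`. -/
def GeneratesWithUnits (S : Set (Mor C)) : Prop :=
  ∀ a : Mor C, ∃ w : List (Mor C), (∀ x ∈ w, x ∈ S ∨ MInv x) ∧ ProdEq w a

/-- `𝔖♯` is closed under right divisors. -/
def ClosedRightDiv (S : Set (Mor C)) : Prop :=
  ∀ (x y : Mor C) (h : y.2.1 = x.1), mcomp x y h ∈ SSharp S → y ∈ SSharp S

/-- `𝔖` is a Garside family in `𝔠`: it is closed under right comultiples, `𝔖 ∪ 𝔠*`
generates `𝔠`, `𝔖♯` is closed under right divisors, and every element of `𝔠` admits an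
`𝔖`-normal decomposition by letters of `𝔖♯`. -/
def IsGarside (S : Set (Mor C)) : Prop :=
  ClosedRightComult S ∧ GeneratesWithUnits S ∧ ClosedRightDiv S ∧
    ∀ a : Mor C, ∃ w : List (Mor C),
      (∀ x ∈ w, x ∈ SSharp S) ∧ IsNormalWord S w ∧ ProdEq w a

/-- `𝔖` is `=*`-transverse: distinct elements of `𝔖` generate distinct principal
right ideals. -/
def Transverse (S : Set (Mor C)) : Prop :=
  ∀ s₁ ∈ S, ∀ s₂ ∈ S, princ s₁ = princ s₂ → s₁ = s₂

/-- A (finite or infinite) word in `𝔖` of length `L ∈ ℕ∞`, recorded by a function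
`w : ℕ → Mor C` whose entries below `L` are relevant: all letters lie in `𝔖`,
consecutive letters are composable, and each consecutive pair is `𝔖`-normal. -/
def GoodWord (S : Set (Mor C)) (L : ℕ∞) (w : ℕ → Mor C) : Prop :=
  (∀ n : ℕ, (n : ℕ∞) < L → w n ∈ S) ∧
  (∀ n : ℕ, ((n + 1 : ℕ) : ℕ∞) < L → (w n).1 = (w (n + 1)).2.1) ∧
  (∀ n : ℕ, ((n + 1 : ℕ) : ℕ∞) < L → NormalPair S (w n) (w (n + 1)))

/-- The character `χ_x` of the word `x = (L, w)`:  `χ_x(e) = 1` iff some finite prefix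
product `w₁ ⋯ wₙ` (with `n < L`) lies in `e`. -/
def wordChi (L : ℕ∞) (w : ℕ → Mor C) : Set (Mor C) → Prop :=
  fun e => ∃ (n : ℕ) (m : Mor C), (n : ℕ∞) < L ∧
    ProdEq ((List.range (n + 1)).map w) m ∧ m ∈ e

section Lemmas
variable {C : Type*} [Category C]

lemma mor_ext {x y : Mor C} (h1 : x.1 = y.1) (h2 : x.2.1 = y.2.1)
    (h3 : x.2.2 ≫ eqToHom h2 = eqToHom h1 ≫ y.2.2) : x = y := by
  obtain ⟨a, b, f⟩ := x; obtain ⟨a', b', g⟩ := y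
  dsimp at h1 h2 h3; subst h1; subst h2; simp at h3; subst h3; rfl

lemma mor_hom_congr {x y : Mor C} (h : x = y) (h1 : x.1 = y.1) (h2 : x.2.1 = y.2.1) :
    x.2.2 ≫ eqToHom h2 = eqToHom h1 ≫ y.2.2 := by subst h; simp

@[simp] lemma mcomp_fst (g f : Mor C) (h : f.2.1 = g.1) : (mcomp g f h).1 = f.1 := rfl
@[simp] lemma mcomp_snd (g f : Mor C) (h : f.2.1 = g.1) : (mcomp g f h).2.1 = g.2.1 := rfl

lemma mcomp_assoc {a b c : Mor C} (h1 : b.2.1 = a.1) (h2 : c.2.1 = b.1) :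
    mcomp (mcomp a b h1) c h2 = mcomp a (mcomp b c h2) h1 := by
  obtain ⟨a1, a2, fa⟩ := a; obtain ⟨b1, b2, fb⟩ := b; obtain ⟨c1, c2, fc⟩ := c
  dsimp at h1 h2; subst h1; subst h2
  simp [mcomp]

lemma mcomp_left_cancel (hmono : ∀ {a b : C} (f : a ⟶ b), Mono f)
    {a x y : Mor C} (hx : x.2.1 = a.1) (hy : y.2.1 = a.1)
    (h : mcomp a x hx = mcomp a y hy) : x = y := by
  obtain ⟨a1, a2, fa⟩ := a; obtain ⟨x1, x2, fx⟩ := x; obtain ⟨y1, y2, fy⟩ := y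
  dsimp at hx hy; subst hx; subst hy
  have h1 : x1 = y1 := congrArg (fun m : Mor C => m.1) h
  subst h1
  have h2 := mor_hom_congr h rfl rfl
  simp only [mcomp, eqToHom_refl, Category.id_comp, Category.comp_id] at h2
  have := hmono fa
  replace h2 : fx ≫ fa = fy ≫ fa := by
    simp only [mcomp, Sigma.mk.injEq, heq_eq_eq, true_and, eqToHom_refl, Category.id_comp] at h; exact h
  replace h2 := (cancel_mono fa).1 h2
  exact mor_ext rfl rfl (by simpa using h2)

lemma ldvd_iff {a b : Mor C} : ldvd a b ↔ ∃ (c : Mor C) (hc : c.2.1 = a.1), b = mcomp a c hc := by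
  constructor
  · rintro ⟨c, g, rfl⟩
    exact ⟨⟨c, a.1, g⟩, rfl, by simp [mcomp]⟩
  · rintro ⟨c, hc, rfl⟩
    exact ⟨c.1, c.2.2 ≫ eqToHom hc, by simp [mcomp]⟩

lemma ldvd_mcomp (a c : Mor C) (hc : c.2.1 = a.1) : ldvd a (mcomp a c hc) :=
  ldvd_iff.2 ⟨c, hc, rfl⟩

lemma ldvd_refl (a : Mor C) : ldvd a a :=
  ⟨a.1, 𝟙 a.1, mor_ext rfl rfl (by simp)⟩

lemma ldvd_trans {a b c : Mor C} (h1 : ldvd a b) (h2 : ldvd b c) : ldvd a c := by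
  rw [ldvd_iff] at *
  obtain ⟨x, hx, rfl⟩ := h1
  obtain ⟨y, hy, rfl⟩ := h2
  exact ⟨mcomp x y hy, hx, mcomp_assoc hx hy⟩

lemma princ_subset {a b : Mor C} (h : ldvd a b) : princ b ⊆ princ a := by
  intro z hz; exact ldvd_trans h hz

lemma ldvd_cod {a b : Mor C} (h : ldvd a b) : b.2.1 = a.2.1 := by
  rw [ldvd_iff] at h; obtain ⟨c, hc, rfl⟩ := h; rfl

end Lemmas
section Lemmas2
variable {C : Type*} [Category C]

/-- If `a · z = a` then `z` is invertible. -/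
lemma minv_of_mcomp_eq (hmono : ∀ {a b : C} (f : a ⟶ b), Mono f)
    {a z : Mor C} (hz : z.2.1 = a.1) (h : mcomp a z hz = a) : MInv z := by
  have h1 : (mcomp a z hz).1 = a.1 := congrArg (fun m : Mor C => m.1) h
  have h2 := mor_hom_congr h h1 rfl
  have h3 : (z.2.2 ≫ eqToHom hz) ≫ a.2.2 = eqToHom h1 ≫ a.2.2 := by
    simpa [mcomp] using h2
  have := hmono a.2.2
  replace h3 := (cancel_mono a.2.2).1 h3
  have h4 : z.2.2 = eqToHom h1 ≫ eqToHom hz.symm := by rw [← h3]; simp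
  show IsIso z.2.2
  have h5 : z.2.2 = eqToHom (h1.trans hz.symm) := by rw [h4, eqToHom_trans]
  rw [h5]; exact (inferInstance : IsIso (eqToHom (h1.trans hz.symm)))

/-- If `q · r` is invertible then `q` is invertible. -/
lemma minv_left_of_mcomp (hmono : ∀ {a b : C} (f : a ⟶ b), Mono f)
    {q r : Mor C} (hr : r.2.1 = q.1) (h : MInv (mcomp q r hr)) : MInv q := by
  obtain ⟨q1, q2, fq⟩ := q; obtain ⟨r1, r2, fr⟩ := r
  dsimp at hr; subst hr
  simp only [MInv, mcomp] at h ⊢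
  -- h : IsIso ((fr ≫ eqToHom rfl ≫ fq))
  simp only [eqToHom_refl, Category.id_comp] at h
  -- fq mono, fr ≫ fq iso ⇒ fq iso
  obtain ⟨i, hi1, hi2⟩ := h
  have hm := hmono fq
  refine ⟨⟨i ≫ fr, ?_, ?_⟩⟩
  · have : (fq ≫ i ≫ fr) ≫ fq = 𝟙 _ ≫ fq := by
      simp only [Category.assoc, hi2]; simp
    exact (cancel_mono fq).1 this
  · simpa [Category.assoc] using hi2

/-- An invertible element divides anything with the same codomain. -/
lemma minv_ldvd {v d : Mor C} (hv : MInv v) (h : d.2.1 = v.2.1) : ldvd v d := by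
  obtain ⟨v1, v2, fv⟩ := v; obtain ⟨d1, d2, fd⟩ := d
  dsimp at h; subst h
  have : IsIso fv := hv
  exact ⟨d1, fd ≫ inv fv, by simp⟩

/-- `a · u ⪯ a` when `u` is invertible. -/
lemma ldvd_mcomp_minv {a u : Mor C} (hu : MInv u) (h : u.2.1 = a.1) :
    ldvd (mcomp a u h) a := by
  obtain ⟨a1, a2, fa⟩ := a; obtain ⟨u1, u2, fu⟩ := u
  dsimp at h; subst h
  have : IsIso fu := hu
  refine ⟨u2, (inv fu : u2 ⟶ u1), ?_⟩
  simp [mcomp]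

lemma ldvd_mcomp_mono {x y a : Mor C} (h : ldvd x y) (hx : x.2.1 = a.1) (hy : y.2.1 = a.1) :
    ldvd (mcomp a x hx) (mcomp a y hy) := by
  rw [ldvd_iff] at h
  obtain ⟨c, hc, rfl⟩ := h
  rw [ldvd_iff]
  exact ⟨c, hc, (mcomp_assoc hx hc).symm⟩

lemma ldvd_mcomp_cancel (hmono : ∀ {a b : C} (f : a ⟶ b), Mono f)
    {x y a : Mor C} (hx : x.2.1 = a.1) (hy : y.2.1 = a.1)
    (h : ldvd (mcomp a x hx) (mcomp a y hy)) : ldvd x y := by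
  rw [ldvd_iff] at h
  obtain ⟨c, hc, hc'⟩ := h
  rw [mcomp_assoc hx hc] at hc'
  have := mcomp_left_cancel (x := y) (y := mcomp x c hc) hmono hy hx hc'
  rw [ldvd_iff]
  exact ⟨c, hc, this⟩

/-- `b ⪯ a·q` and divisibility of `a·q` by `a·q` ... main: if `a·q ⪯ a` then `q` invertible-ish. -/
lemma minv_of_ldvd_self (hmono : ∀ {a b : C} (f : a ⟶ b), Mono f)
    {a q : Mor C} (hq : q.2.1 = a.1) (h : ldvd (mcomp a q hq) a) : MInv q := by
  rw [ldvd_iff] at h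
  obtain ⟨r, hr, hr'⟩ := h
  rw [mcomp_assoc hq hr] at hr'
  exact minv_left_of_mcomp hmono hr (minv_of_mcomp_eq hmono hq hr'.symm)

end Lemmas2
section Lemmas3
variable {C : Type*} [Category C]

lemma mcomp_id_right (a : Mor C) (v : C) (hc : v = a.1) :
    mcomp a ⟨v, v, 𝟙 v⟩ hc = a := by
  subst hc
  exact mor_ext rfl rfl (by simp [mcomp]; exact (Category.id_comp _).symm)

lemma prodEq_singleton {a m : Mor C} (h : ProdEq [a] m) : m = a := by
  cases h with
  | single => rfl
  | cons s h hc =>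
    cases h with
    | nil v => exact mcomp_id_right a v hc

lemma prodEq_cons {a m : Mor C} {l : List (Mor C)} (h : ProdEq (a :: l) m) (hl : l ≠ []) :
    ∃ (b : Mor C) (hc : b.2.1 = a.1), ProdEq l b ∧ m = mcomp a b hc := by
  cases h with
  | single => exact absurd rfl hl
  | cons s h hc =>
    cases l with
    | nil => exact absurd rfl hl
    | cons x l' => exact ⟨_, hc, h, rfl⟩

lemma prodEq_cod {a m : Mor C} {l : List (Mor C)} (h : ProdEq (a :: l) m) :
    m.2.1 = a.2.1 := by
  cases h with
  | single => rfl
  | cons s h hc => rfl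

lemma prodEq_unique {l : List (Mor C)} (hl : l ≠ []) :
    ∀ {m m' : Mor C}, ProdEq l m → ProdEq l m' → m = m' := by
  induction l with
  | nil => exact absurd rfl hl
  | cons a l ih =>
    intro m m' h h'
    cases l with
    | nil => rw [prodEq_singleton h, prodEq_singleton h']
    | cons x l' =>
      obtain ⟨b, hc, hb, rfl⟩ := prodEq_cons h (by simp)
      obtain ⟨b', hc', hb', rfl⟩ := prodEq_cons h' (by simp)
      have : b = b' := ih (by simp) hb hb'
      subst this
      rfl

lemma prodEq_exists {l : List (Mor C)} (hl : l ≠ [])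
    (hc : l.Chain' (fun a b => a.1 = b.2.1)) : ∃ m, ProdEq l m := by
  induction l with
  | nil => exact absurd rfl hl
  | cons a l ih =>
    cases l with
    | nil => exact ⟨a, ProdEq.single a⟩
    | cons x l' =>
      simp only [List.Chain', List.isChain_cons_cons] at hc
      obtain ⟨m', hm'⟩ := ih (by simp) hc.2
      have hcc : m'.2.1 = a.1 := by rw [prodEq_cod hm', hc.1]
      exact ⟨mcomp a m' hcc, ProdEq.cons a hm' hcc⟩

lemma prodEq_append {l₁ l₂ : List (Mor C)} (h1 : l₁ ≠ []) (h2 : l₂ ≠ []) :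
    ∀ {m : Mor C}, ProdEq (l₁ ++ l₂) m →
    ∃ (m₁ m₂ : Mor C) (hc : m₂.2.1 = m₁.1),
      ProdEq l₁ m₁ ∧ ProdEq l₂ m₂ ∧ m = mcomp m₁ m₂ hc := by
  induction l₁ with
  | nil => exact absurd rfl h1
  | cons a l ih =>
    intro m h
    cases l with
    | nil =>
      obtain ⟨b, hc, hb, rfl⟩ := prodEq_cons h h2
      exact ⟨a, b, hc, ProdEq.single a, hb, rfl⟩
    | cons x l' =>
      obtain ⟨b, hc, hb, rfl⟩ := prodEq_cons h (by simp)
      obtain ⟨m₁, m₂, hcc, hp1, hp2, rfl⟩ := ih (by simp) hb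
      have hca : m₁.2.1 = a.1 := hc
      exact ⟨mcomp a m₁ hca, m₂, hcc, ProdEq.cons a hp1 hca, hp2, (mcomp_assoc hca hcc).symm⟩

lemma minv_head {s m : Mor C} {l : List (Mor C)} (hmono : ∀ {a b : C} (f : a ⟶ b), Mono f)
    (h : ProdEq (s :: l) m) (hm : MInv m) : MInv s := by
  cases h with
  | single => exact hm
  | cons s h hc => exact minv_left_of_mcomp hmono hc hm

end Lemmas3
section Lemmas4
variable {C : Type*} [Category C]

lemma mem_sSharp_of_mem {S : Set (Mor C)} {s : Mor C} (hs : s ∈ S) : s ∈ SSharp S :=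
  Or.inr ⟨s, hs, ⟨s.1, s.1, 𝟙 s.1⟩, show IsIso (𝟙 s.1) by infer_instance, rfl,
    (mcomp_id_right s s.1 rfl).symm⟩

/-- The key locality lemma: if a word is `S`-normal with letters in `S` and `r ∈ S`
divides its product, then `r` divides its first letter. -/
lemma head_ldvd (hmono : ∀ {a b : C} (f : a ⟶ b), Mono f) {S : Set (Mor C)}
    (hCRC : ClosedRightComult S) (hCRD : ClosedRightDiv S) :
    ∀ (l : List (Mor C)) (t m : Mor C), (∀ x ∈ t :: l, x ∈ S) → IsNormalWord S (t :: l) →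
      ProdEq (t :: l) m → ∀ r ∈ S, ldvd r m → ldvd r t := by
  intro l
  induction l with
  | nil =>
    intro t m _ _ hp r _ hd
    rwa [prodEq_singleton hp] at hd
  | cons t₂ l' ih =>
    intro t m hS hN hp r hr hd
    obtain ⟨B, hcB, hB, rfl⟩ := prodEq_cons hp (by simp)
    have ht : t ∈ S := hS t (by simp)
    have hdt : ldvd t (mcomp t B hcB) := ldvd_mcomp t B hcB
    obtain ⟨T, hT, hrT, htT, hTm⟩ := hCRC r hr t ht (mcomp t B hcB) hd hdt
    obtain ⟨u, hcu, rfl⟩ := ldvd_iff.1 htT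
    have huB : ldvd u B := ldvd_mcomp_cancel hmono hcu hcB hTm
    have hu : u ∈ SSharp S := hCRD t u hcu (mem_sSharp_of_mem hT)
    rw [IsNormalWord] at hN; simp only [List.Chain', List.isChain_cons_cons] at hN
    rcases hu with hu | ⟨s, hsS, v, hv, hvs, hueq⟩
    · exact ldvd_trans hrT (ldvd_mcomp_minv hu hcu)
    · subst hueq
      have hsB : ldvd s B := ldvd_trans (ldvd_mcomp s v hvs) huB
      have hst₂ : ldvd s t₂ :=
        ih t₂ B (fun x hx => hS x (List.mem_cons_of_mem t hx)) hN.2 hB s hsS hsB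
      obtain ⟨d, hcd, hdeq⟩ := ldvd_iff.1 hst₂
      have hvd : ldvd v d := minv_ldvd hv (hcd.trans hvs.symm)
      have hut₂ : ldvd (mcomp s v hvs) (mcomp s d hcd) := ldvd_mcomp_mono hvd hvs hcd
      have hct₂ : t₂.2.1 = t.1 := hN.1.1.symm
      have hut₂' : ldvd (mcomp s v hvs) t₂ := by rw [hdeq]; exact hut₂
      have hTtt₂ : ldvd (mcomp t (mcomp s v hvs) hcu) (mcomp t t₂ hct₂) :=
        ldvd_mcomp_mono hut₂' hcu hct₂
      have hprod : ProdEq [t, t₂] (mcomp t t₂ hct₂) :=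
        ProdEq.cons t (ProdEq.single t₂) hct₂
      have hTt : ldvd (mcomp t (mcomp s v hvs) hcu) t :=
        hN.1.2 _ hprod _ hT hTtt₂
      exact ldvd_trans hrT hTt

end Lemmas4
section Lemmas5
variable {C : Type*} [Category C]

lemma isConstructible_princ (m : Mor C) : IsConstructible (princ m) := by
  have h : princ m = mulSet m (objIdeal m.1) := by
    ext z
    simp only [princ, mulSet, objIdeal, Set.mem_setOf_eq]
    constructor
    · rintro ⟨c, g, rfl⟩; exact ⟨c, g, trivial, rfl⟩
    · rintro ⟨c, g, -, rfl⟩; exact ⟨c, g, rfl⟩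
  rw [h]
  exact .mul m (.base m.1)

lemma enat_le_of_forall {a b : ℕ∞} (h : ∀ n : ℕ, (n : ℕ∞) < a → (n : ℕ∞) < b) : a ≤ b := by
  by_contra h'
  push_neg at h'
  have hb : b ≠ ⊤ := h'.ne_top
  obtain ⟨n, rfl⟩ := WithTop.ne_top_iff_exists.1 hb
  exact lt_irrefl _ (h n h')

lemma enat_eq_of_forall {a b : ℕ∞} (h : ∀ n : ℕ, (n : ℕ∞) < a ↔ (n : ℕ∞) < b) : a = b :=
  le_antisymm (enat_le_of_forall fun n hn => (h n).1 hn)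
    (enat_le_of_forall fun n hn => (h n).2 hn)

variable {S : Set (Mor C)} {L : ℕ∞} {w : ℕ → Mor C}

lemma off_letters (hG : GoodWord S L w) {a len : ℕ} (h : ((a + len : ℕ) : ℕ∞) < L) :
    ∀ x ∈ (List.range (len + 1)).map (fun i => w (a + i)), x ∈ S := by
  intro x hx
  obtain ⟨i, hi, rfl⟩ := List.mem_map.1 hx
  rw [List.mem_range] at hi
  refine hG.1 (a + i) (lt_of_le_of_lt ?_ h)
  exact_mod_cast Nat.add_le_add_left (by omega) a

lemma off_normal (hG : GoodWord S L w) {a len : ℕ} (h : ((a + len : ℕ) : ℕ∞) < L) :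
    IsNormalWord S ((List.range (len + 1)).map (fun i => w (a + i))) := by
  rw [IsNormalWord]; simp only [List.Chain', List.isChain_map, List.isChain_range_succ]
  intro i hi
  have hle : ((a + i + 1 : ℕ) : ℕ∞) < L := by
    refine lt_of_le_of_lt ?_ h
    exact_mod_cast by omega
  exact ⟨hG.2.1 (a + i) hle, hG.2.2 (a + i) hle⟩

lemma off_exists (hG : GoodWord S L w) {a len : ℕ} (h : ((a + len : ℕ) : ℕ∞) < L) :
    ∃ m, ProdEq ((List.range (len + 1)).map (fun i => w (a + i))) m := by
  refine prodEq_exists (by simp) ?_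
  exact (off_normal hG h).imp (fun a b hab => hab.1)

lemma off_cons (w : ℕ → Mor C) (a len : ℕ) :
    (List.range (len + 1)).map (fun i => w (a + i)) =
      w a :: (List.range len).map (fun i => w (a + 1 + i)) := by
  rw [List.range_succ_eq_map, List.map_cons, List.map_map]
  refine congrArg₂ _ rfl (List.map_congr_left fun i _ => ?_)
  show w (a + (i + 1)) = w (a + 1 + i)
  congr 1
  omega

lemma head_ldvd_off (hmono : ∀ {a b : C} (f : a ⟶ b), Mono f)
    (hCRC : ClosedRightComult S) (hCRD : ClosedRightDiv S)
    (hG : GoodWord S L w) {a len : ℕ} (h : ((a + len : ℕ) : ℕ∞) < L) {q r : Mor C}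
    (hq : ProdEq ((List.range (len + 1)).map (fun i => w (a + i))) q)
    (hr : r ∈ S) (hd : ldvd r q) : ldvd r (w a) := by
  have hL := off_letters hG h
  have hN := off_normal hG h
  rw [off_cons] at hq hL hN
  exact head_ldvd hmono hCRC hCRD _ (w a) q hL hN hq r hr hd

lemma map_range_eq_off (w : ℕ → Mor C) (n : ℕ) :
    (List.range (n + 1)).map w = (List.range (n + 1)).map (fun i => w (0 + i)) := by
  exact List.map_congr_left fun i _ => by rw [Nat.zero_add]

lemma no_shorter (hmono : ∀ {a b : C} (f : a ⟶ b), Mono f)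
    (hdisj : ∀ s ∈ S, ¬ MInv s) (hG : GoodWord S L w) {k n : ℕ} (hkn : k < n)
    (hn : (n : ℕ∞) < L) {mn mk : Mor C} (hmn : ProdEq ((List.range (n + 1)).map w) mn)
    (hmk : ProdEq ((List.range (k + 1)).map w) mk) (hd : ldvd mn mk) : False := by
  have hsplit : (List.range (n + 1)).map w =
      (List.range (k + 1)).map w ++ (List.range (n - k)).map (fun i => w (k + 1 + i)) := by
    have h1 : n + 1 = (k + 1) + (n - k) := by omega
    rw [h1, List.range_add, List.map_append, List.map_map]
    rfl
  rw [hsplit] at hmn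
  obtain ⟨j, hj⟩ : ∃ j, n - k = j + 1 := ⟨n - k - 1, by omega⟩
  rw [hj] at hmn
  obtain ⟨m₁, m₂, hc, hp1, hp2, rfl⟩ := prodEq_append (by simp) (by simp) hmn
  have he : m₁ = mk := prodEq_unique (by simp) hp1 hmk
  subst he
  have hq : MInv m₂ := minv_of_ldvd_self hmono hc hd
  rw [off_cons] at hp2
  have hinv : MInv (w (k + 1)) := minv_head hmono hp2 hq
  refine hdisj (w (k + 1)) (hG.1 (k + 1) ?_) hinv
  refine lt_of_le_of_lt ?_ hn
  exact_mod_cast by omega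

end Lemmas5
section Lemmas6
variable {C : Type*} [Category C] {S : Set (Mor C)}

lemma letter_eq (htr : Transverse S) {s t : Mor C} (hs : s ∈ S) (ht : t ∈ S)
    (h1 : ldvd s t) (h2 : ldvd t s) : s = t :=
  htr s hs t ht (Set.Subset.antisymm (princ_subset h2) (princ_subset h1))

lemma dvd_letter (hmono : ∀ {a b : C} (f : a ⟶ b), Mono f)
    (hCRC : ClosedRightComult S) (hCRD : ClosedRightDiv S)
    {L₁ L₂ : ℕ∞} {w₁ w₂ : ℕ → Mor C}
    (h₁ : GoodWord S L₁ w₁) (h₂ : GoodWord S L₂ w₂)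
    {n k : ℕ} (hn : (n : ℕ∞) < L₁) (hk : (k : ℕ∞) < L₂)
    (hpre : ∀ j, j < n → w₁ j = w₂ j)
    {mn m' : Mor C} (hmn : ProdEq ((List.range (n + 1)).map w₁) mn)
    (hm' : ProdEq ((List.range (k + 1)).map w₂) m') (hdvd : ldvd mn m')
    (hnk : n ≤ k) : ldvd (w₁ n) (w₂ n) := by
  rcases Nat.eq_zero_or_pos n with rfl | hpos
  · have h0 : (List.range (0 + 1)).map w₁ = [w₁ 0] := by rw [List.range_succ]; simp
    rw [h0] at hmn
    have he : mn = w₁ 0 := prodEq_singleton hmn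
    subst he
    rw [map_range_eq_off] at hm'
    exact head_ldvd_off hmono hCRC hCRD h₂ (by simpa using hk) hm' (h₁.1 0 hn) hdvd
  · -- split the w₁-prefix as (prefix n) ++ [w₁ n]
    have hsplit1 : (List.range (n + 1)).map w₁ = (List.range n).map w₁ ++ [w₁ n] := by
      rw [List.range_succ, List.map_append]; rfl
    rw [hsplit1] at hmn
    obtain ⟨p', x, hcx, hp', hx, rfl⟩ := prodEq_append
      (by simpa using Nat.pos_iff_ne_zero.1 hpos) (by simp) hmn
    have hxe : x = w₁ n := prodEq_singleton hx
    subst hxe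
    -- split the w₂-prefix as (prefix n) ++ middle
    obtain ⟨j', hj'⟩ : ∃ j', k + 1 - n = j' + 1 := ⟨k - n, by omega⟩
    have hsplit2 : (List.range (k + 1)).map w₂ =
        (List.range n).map w₂ ++ (List.range (j' + 1)).map (fun i => w₂ (n + i)) := by
      have e : k + 1 = n + (j' + 1) := by omega
      rw [e, List.range_add, List.map_append, List.map_map]
      rfl
    rw [hsplit2] at hm'
    obtain ⟨p, q, hcq, hp, hqq, rfl⟩ := prodEq_append
      (by simpa using Nat.pos_iff_ne_zero.1 hpos) (by simp) hm'
    have hpp : (List.range n).map w₂ = (List.range n).map w₁ :=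
      List.map_congr_left fun i hi => (hpre i (List.mem_range.1 hi)).symm
    rw [hpp] at hp
    have he : p = p' := prodEq_unique (by simpa using Nat.pos_iff_ne_zero.1 hpos) hp hp'
    subst he
    have hdq : ldvd (w₁ n) q := ldvd_mcomp_cancel hmono hcx hcq hdvd
    refine head_ldvd_off hmono hCRC hCRD h₂ (a := n) (len := j') ?_ hqq (h₁.1 n hn) hdq
    rw [show n + j' = k from by omega]
    exact hk

lemma core (hmono : ∀ {a b : C} (f : a ⟶ b), Mono f)
    (hCRC : ClosedRightComult S) (hCRD : ClosedRightDiv S)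
    (htr : Transverse S) (hdisj : ∀ s ∈ S, ¬ MInv s)
    {L₁ L₂ : ℕ∞} {w₁ w₂ : ℕ → Mor C}
    (h₁ : GoodWord S L₁ w₁) (h₂ : GoodWord S L₂ w₂)
    (H1 : ∀ (n : ℕ) (m : Mor C), (n : ℕ∞) < L₁ → ProdEq ((List.range (n + 1)).map w₁) m →
      ∃ (k : ℕ) (m' : Mor C), (k : ℕ∞) < L₂ ∧ ProdEq ((List.range (k + 1)).map w₂) m' ∧
        ldvd m m')
    (H2 : ∀ (n : ℕ) (m : Mor C), (n : ℕ∞) < L₂ → ProdEq ((List.range (n + 1)).map w₂) m →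
      ∃ (k : ℕ) (m' : Mor C), (k : ℕ∞) < L₁ ∧ ProdEq ((List.range (k + 1)).map w₁) m' ∧
        ldvd m m') :
    ∀ n : ℕ, (n : ℕ∞) < L₁ → (n : ℕ∞) < L₂ ∧ w₁ n = w₂ n := by
  intro n
  induction n using Nat.strong_induction_on with
  | _ n IH =>
    intro hn
    have hpre : ∀ j, j < n → w₁ j = w₂ j := fun j hj =>
      (IH j hj (lt_of_le_of_lt (by exact_mod_cast hj.le) hn)).2
    obtain ⟨mn, hmn⟩ : ∃ m, ProdEq ((List.range (n + 1)).map w₁) m := by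
      rw [map_range_eq_off]
      exact off_exists h₁ (by simpa using hn)
    obtain ⟨k, m', hk, hm', hdvd⟩ := H1 n mn hn hmn
    have hnk : n ≤ k := by
      by_contra hkn
      push_neg at hkn
      have hl : (List.range (k + 1)).map w₂ = (List.range (k + 1)).map w₁ :=
        List.map_congr_left fun i hi => (hpre i (by have := List.mem_range.1 hi; omega)).symm
      rw [hl] at hm'
      exact no_shorter hmono hdisj h₁ hkn hn hmn hm' hdvd
    have hnL₂ : (n : ℕ∞) < L₂ := lt_of_le_of_lt (by exact_mod_cast hnk) hk
    refine ⟨hnL₂, ?_⟩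
    have hd1 : ldvd (w₁ n) (w₂ n) :=
      dvd_letter hmono hCRC hCRD h₁ h₂ hn hk hpre hmn hm' hdvd hnk
    -- symmetric direction
    obtain ⟨pn, hpn⟩ : ∃ m, ProdEq ((List.range (n + 1)).map w₂) m := by
      rw [map_range_eq_off]
      exact off_exists h₂ (by simpa using hnL₂)
    obtain ⟨j, m'', hj, hm'', hdvd'⟩ := H2 n pn hnL₂ hpn
    have hnj : n ≤ j := by
      by_contra hjn
      push_neg at hjn
      have hl : (List.range (j + 1)).map w₁ = (List.range (j + 1)).map w₂ :=
        List.map_congr_left fun i hi => (hpre i (by have := List.mem_range.1 hi; omega))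
      rw [hl] at hm''
      exact no_shorter hmono hdisj h₂ hjn hnL₂ hpn hm'' hdvd'
    have hd2 : ldvd (w₂ n) (w₁ n) :=
      dvd_letter hmono hCRC hCRD h₂ h₁ hnL₂ hj
        (fun i hi => (hpre i hi).symm) hpn hm'' hdvd' hnj
    exact letter_eq htr (h₁.1 n hn) (h₂.1 n hnL₂) hd1 hd2

end Lemmas6

/-- Let `𝔠` be a countable finitely aligned left cancellative small category and `𝔖` a
Garside family with `𝔖 ∩ 𝔠* = ∅`, `=*`-transverse and locally bounded.  Two normal
(finite or infinite) words `x = s₁ s₂ ⋯` and `y = t₁ t₂ ⋯` satisfy `χ_x = χ_y` if and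
only if `x = y` (same length and `sᵢ = tᵢ` for all `i`). -/
theorem wordChi_eq_iff [Countable (Mor C)]
    (hmono : ∀ {a b : C} (f : a ⟶ b), Mono f)
    (hFA : ∀ a b : Mor C, ∃ F : Finset (Mor C), princ a ∩ princ b = ⋃ c ∈ F, princ c)
    (S : Set (Mor C)) (hG : IsGarside S) (htr : Transverse S)
    (hdisj : ∀ s ∈ S, ¬ MInv s)
    (hlb : ¬ ∃ f : ℕ → Mor C, (∀ n, f n ∈ S) ∧ (∀ n, (f n).2.1 = (f 0).2.1) ∧
      ∀ n, princ (f (n + 1)) ⊂ princ (f n))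
    (L₁ L₂ : ℕ∞) (w₁ w₂ : ℕ → Mor C)
    (h₁ : GoodWord S L₁ w₁) (h₂ : GoodWord S L₂ w₂)
    (hne₁ : L₁ ≠ 0) (hne₂ : L₂ ≠ 0) :
    (∀ e : Set (Mor C), IsConstructible e → (wordChi L₁ w₁ e ↔ wordChi L₂ w₂ e)) ↔
      (L₁ = L₂ ∧ ∀ n : ℕ, (n : ℕ∞) < L₁ → w₁ n = w₂ n) := by
  constructor
  · intro Hχ
    have H1 : ∀ (n : ℕ) (m : Mor C), (n : ℕ∞) < L₁ →
        ProdEq ((List.range (n + 1)).map w₁) m →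
        ∃ (k : ℕ) (m' : Mor C), (k : ℕ∞) < L₂ ∧
          ProdEq ((List.range (k + 1)).map w₂) m' ∧ ldvd m m' := by
      intro n m hn hm
      have hχ : wordChi L₁ w₁ (princ m) := ⟨n, m, hn, hm, ldvd_refl m⟩
      obtain ⟨k, m', hk, hm', hmem⟩ := (Hχ (princ m) (isConstructible_princ m)).1 hχ
      exact ⟨k, m', hk, hm', hmem⟩
    have H2 : ∀ (n : ℕ) (m : Mor C), (n : ℕ∞) < L₂ →
        ProdEq ((List.range (n + 1)).map w₂) m →
        ∃ (k : ℕ) (m' : Mor C), (k : ℕ∞) < L₁ ∧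
          ProdEq ((List.range (k + 1)).map w₁) m' ∧ ldvd m m' := by
      intro n m hn hm
      have hχ : wordChi L₂ w₂ (princ m) := ⟨n, m, hn, hm, ldvd_refl m⟩
      obtain ⟨k, m', hk, hm', hmem⟩ := (Hχ (princ m) (isConstructible_princ m)).2 hχ
      exact ⟨k, m', hk, hm', hmem⟩
    have hcore := core hmono hG.1 hG.2.2.1 htr hdisj h₁ h₂ H1 H2
    have hcore' := core hmono hG.1 hG.2.2.1 htr hdisj h₂ h₁ H2 H1
    exact ⟨enat_eq_of_forall fun n =>
        ⟨fun hn => (hcore n hn).1, fun hn => (hcore' n hn).1⟩,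
      fun n hn => (hcore n hn).2⟩
  · rintro ⟨rfl, hw⟩ e _
    have hl : ∀ n : ℕ, (n : ℕ∞) < L₁ →
        (List.range (n + 1)).map w₁ = (List.range (n + 1)).map w₂ := by
      intro n hn
      refine List.map_congr_left fun i hi => hw i ?_
      have hi' : i ≤ n := by have := List.mem_range.1 hi; omega
      exact lt_of_le_of_lt (by exact_mod_cast hi') hn
    constructor
    · rintro ⟨n, m, hn, hp, hm⟩
      exact ⟨n, m, hn, (hl n hn) ▸ hp, hm⟩
    · rintro ⟨n, m, hn, hp, hm⟩
      exact ⟨n, m, hn, (hl n hn).symm ▸ hp, hm⟩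
end
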